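/- Let A = B − C be a weak regular splitting and A = U − V a regular splitting of a nonsingular real n×n matrix A with A⁻¹ ≥ 0. If B⁻¹ ≥ U⁻¹ entrywise, then ρ(B⁻¹C) ≤ ρ(U⁻¹V) < 1. -/

import Mathlib

open Matrix

/-- `X` is the group inverse of `A`. -/
def IsGroupInv {n : ℕ} (A X : Matrix (Fin n) (Fin n) ℝ) : Prop :=
  A * X * A = A ∧ X * A * X = X ∧ A * X = X * A

/-- Spectral radius of a real matrix: sup of moduli of its complex eigenvalues. -/
noncomputable def specRad {n : ℕ} (A : Matrix (Fin n) (Fin n) ℝ) : ℝ :=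
  sSup ((fun z => ‖z‖) '' spectrum ℂ (A.map (algebraMap ℝ ℂ)))

/-- `A = U - V` is a proper splitting: `R(U) = R(A)` and `N(U) = N(A)`. -/
def ProperSplitting {n : ℕ} (A U V : Matrix (Fin n) (Fin n) ℝ) : Prop :=
  A = U - V ∧ LinearMap.range U.mulVecLin = LinearMap.range A.mulVecLin ∧
    LinearMap.ker U.mulVecLin = LinearMap.ker A.mulVecLin

/-- Entrywise nonnegativity of a matrix. -/
def Nonneg {n : ℕ} (M : Matrix (Fin n) (Fin n) ℝ) : Prop :=
  ∀ i j, 0 ≤ M i j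

set_option maxHeartbeats 1000000

attribute [local instance] Matrix.linftyOpNormedAddCommGroup Matrix.linftyOpNormedRing
  Matrix.linftyOpNormedAlgebra

namespace CompSplitAux

open Filter Finset
open scoped NNReal ENNReal

lemma aux_ring {R : Type*} [Ring R] (g₁ g₂ x y a : R) :
    (g₂ - g₁) * (x * a) + g₁ * (x * a - y * a) = g₂ * x * a - g₁ * y * a := by
  noncomm_ring

noncomputable instance {n : ℕ} : CompleteSpace (Matrix (Fin n) (Fin n) ℂ) :=
  by infer_instance

variable {n : ℕ}

/-- complexification as a ring hom -/
noncomputable abbrev φ {n : ℕ} : Matrix (Fin n) (Fin n) ℝ →+* Matrix (Fin n) (Fin n) ℂ :=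
  (algebraMap ℝ ℂ).mapMatrix

lemma specRad_eq (M : Matrix (Fin n) (Fin n) ℝ) :
    specRad M = sSup ((fun z => ‖z‖) '' spectrum ℂ (φ M)) := rfl

lemma nn_mul {M N : Matrix (Fin n) (Fin n) ℝ} (hM : Nonneg M) (hN : Nonneg N) :
    Nonneg (M * N) := fun i j => by
  rw [Matrix.mul_apply]
  exact Finset.sum_nonneg fun k _ => mul_nonneg (hM i k) (hN k j)

lemma nn_pow {M : Matrix (Fin n) (Fin n) ℝ} (hM : Nonneg M) (k : ℕ) : Nonneg (M ^ k) := by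
  induction k with
  | zero => intro i j; rw [pow_zero]; by_cases h : i = j <;>
      simp [Matrix.one_apply, h]
  | succ k ih => rw [pow_succ]; exact nn_mul ih hM

lemma specRad_nonneg (M : Matrix (Fin n) (Fin n) ℝ) : 0 ≤ specRad M :=
  Real.sSup_nonneg fun x hx => by obtain ⟨z, -, rfl⟩ := hx; exact norm_nonneg _

lemma specRad_le {M : Matrix (Fin n) (Fin n) ℝ} {t : ℝ} (ht : 0 ≤ t)
    (h : ∀ z ∈ spectrum ℂ (φ M), ‖z‖ ≤ t) : specRad M ≤ t := by
  apply Real.sSup_le _ ht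
  rintro x ⟨z, hz, rfl⟩; exact h z hz

lemma abs_le_specRad (hn : 0 < n) {M : Matrix (Fin n) (Fin n) ℝ} {z : ℂ}
    (hz : z ∈ spectrum ℂ (φ M)) : ‖z‖ ≤ specRad M := by
  haveI : Nonempty (Fin n) := ⟨⟨0, hn⟩⟩
  refine le_csSup ⟨‖φ M‖, ?_⟩ ⟨z, hz, rfl⟩
  rintro x ⟨w, hw, rfl⟩
  simpa using spectrum.norm_le_norm_of_mem hw

lemma abs_pow_le_norm (hn : 0 < n) {M : Matrix (Fin n) (Fin n) ℝ} {z : ℂ}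
    (hz : z ∈ spectrum ℂ (φ M)) (m : ℕ) : ‖z‖ ^ m ≤ ‖(φ M) ^ m‖ := by
  haveI : Nonempty (Fin n) := ⟨⟨0, hn⟩⟩
  have hmem : z ^ m ∈ spectrum ℂ ((φ M) ^ m) :=
    spectrum.pow_image_subset (φ M) m ⟨z, hz, rfl⟩
  calc ‖z‖ ^ m = ‖z ^ m‖ := by
        rw [norm_pow]
    _ ≤ ‖(φ M) ^ m‖ := spectrum.norm_le_norm_of_mem hmem

lemma norm_map_mono {M N : Matrix (Fin n) (Fin n) ℝ} (h0 : Nonneg M)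
    (h : ∀ i j, M i j ≤ N i j) : ‖φ M‖ ≤ ‖φ N‖ := by
  rw [Matrix.linfty_opNorm_def, Matrix.linfty_opNorm_def]
  norm_cast
  refine Finset.sup_mono_fun fun i _ => Finset.sum_le_sum fun j _ => ?_
  have h1 : |M i j| ≤ |N i j| := by
    rw [abs_of_nonneg (h0 i j), abs_of_nonneg ((h0 i j).trans (h i j))]
    exact h i j
  have h2 : ‖((M i j : ℝ) : ℂ)‖₊ ≤ ‖((N i j : ℝ) : ℂ)‖₊ := by
    rw [← NNReal.coe_le_coe, coe_nnnorm, coe_nnnorm]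
    simpa [Complex.norm_real, Real.norm_eq_abs] using h1
  simpa [RingHom.mapMatrix_apply, Matrix.map_apply] using h2

lemma norm_map_le_entry_sum (M : Matrix (Fin n) (Fin n) ℝ) :
    ‖φ M‖ ≤ ∑ i, ∑ j, |M i j| := by
  rw [Matrix.linfty_opNorm_def]
  have h1 : ((Finset.univ.sup fun i => ∑ j, ‖(φ M) i j‖₊ : ℝ≥0) : ℝ) ≤
      ((∑ i, ∑ j, ‖(φ M) i j‖₊ : ℝ≥0) : ℝ) := by
    exact_mod_cast Finset.sup_le fun i _ =>
      Finset.single_le_sum (f := fun i => ∑ j, ‖(φ M) i j‖₊) (fun _ _ => zero_le)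
        (Finset.mem_univ i)
  refine h1.trans (le_of_eq ?_)
  push_cast [coe_nnnorm]
  refine Finset.sum_congr rfl fun i _ => Finset.sum_congr rfl fun j _ => ?_
  simp [RingHom.mapMatrix_apply, Matrix.map_apply, Complex.norm_real, Real.norm_eq_abs]

lemma specRad_lt_one (hn : 0 < n) {G : Matrix (Fin n) (Fin n) ℝ}
    (h : ∃ k, 1 ≤ k ∧ ‖φ G ^ k‖ < 1) : specRad G < 1 := by
  obtain ⟨k, hk1, hk⟩ := h
  set c := ‖φ G ^ k‖ with hc
  have hc0 : 0 ≤ c := norm_nonneg _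
  set t := c ^ ((k : ℝ))⁻¹ with htdef
  have ht1 : t < 1 := Real.rpow_lt_one hc0 hk (by positivity)
  refine lt_of_le_of_lt ?_ ht1
  refine specRad_le (Real.rpow_nonneg hc0 _) fun z hz => ?_
  have h1 : ‖z‖ ^ k ≤ c := abs_pow_le_norm hn hz k
  have htk : t ^ k = c := Real.rpow_inv_natCast_pow hc0 (by omega)
  exact le_of_pow_le_pow_left₀ (by omega) (Real.rpow_nonneg hc0 _) (htk ▸ h1)

lemma specRad_le_specRad (hn : 0 < n) {G₁ G₂ : Matrix (Fin n) (Fin n) ℝ} {K : ℝ}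
    (hK : 0 ≤ K)
    (hcomp : ∀ m : ℕ, 1 ≤ m → ‖φ G₁ ^ m‖ ≤ K * ‖φ G₂ ^ m‖) :
    specRad G₁ ≤ specRad G₂ := by
  refine specRad_le (specRad_nonneg _) fun z hz => ?_
  by_contra hcon
  push_neg at hcon
  set r := specRad G₂ with hr
  set t := (r + ‖z‖) / 2 with htdef
  have hr0 : 0 ≤ r := specRad_nonneg _
  have hrt : r < t := by rw [htdef]; linarith
  have htz : t < ‖z‖ := by rw [htdef]; linarith
  have ht0 : 0 < t := lt_of_le_of_lt hr0 hrt
  have hsr : spectralRadius ℂ (φ G₂) ≤ ENNReal.ofReal r := by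
    refine iSup₂_le fun w hw => ?_
    rw [← ENNReal.ofReal_coe_nnreal, coe_nnnorm]
    exact ENNReal.ofReal_le_ofReal
      (by simpa using abs_le_specRad hn hw)
  have hev : ∀ᶠ m : ℕ in atTop,
      ENNReal.ofReal (‖φ G₂ ^ m‖ ^ (1/(m:ℝ))) < ENNReal.ofReal t :=
    (spectrum.pow_norm_pow_one_div_tendsto_nhds_spectralRadius (φ G₂)).eventually_lt_const
      (lt_of_le_of_lt hsr ((ENNReal.ofReal_lt_ofReal_iff ht0).mpr hrt))
  have hKlt : ∀ᶠ m : ℕ in atTop, K < (‖z‖ / t) ^ m :=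
    (tendsto_pow_atTop_atTop_of_one_lt ((one_lt_div ht0).mpr htz)).eventually_gt_atTop K
  obtain ⟨m, hm1, hmev, hmK⟩ := ((eventually_ge_atTop 1).and (hev.and hKlt)).exists
  have hnorm_t : ‖φ G₂ ^ m‖ < t ^ m := by
    have h1 : ‖φ G₂ ^ m‖ ^ (1/(m:ℝ)) < t := (ENNReal.ofReal_lt_ofReal_iff ht0).mp hmev
    have h2 : (‖φ G₂ ^ m‖ ^ (1/(m:ℝ))) ^ m < t ^ m :=
      pow_lt_pow_left₀ h1 (Real.rpow_nonneg (norm_nonneg _) _) (by omega)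
    rwa [one_div, Real.rpow_inv_natCast_pow (norm_nonneg _) (by omega)] at h2
  have hchain : ‖z‖ ^ m ≤ K * ‖φ G₂ ^ m‖ :=
    (abs_pow_le_norm hn hz m).trans (hcomp m hm1)
  have hfin : ‖z‖ ^ m < ‖z‖ ^ m := by
    calc ‖z‖ ^ m ≤ K * ‖φ G₂ ^ m‖ := hchain
      _ ≤ K * t ^ m := mul_le_mul_of_nonneg_left hnorm_t.le hK
      _ < (‖z‖ / t) ^ m * t ^ m :=
          mul_lt_mul_of_pos_right hmK (pow_pos ht0 m)
      _ = ‖z‖ ^ m := by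
          rw [div_pow, div_mul_cancel₀ _ (pow_ne_zero _ (ne_of_gt ht0))]
  exact absurd hfin (lt_irrefl _)

end CompSplitAux

open CompSplitAux Filter in
theorem comparison_nonsingular_splittings {n : ℕ}
    (A B C U V : Matrix (Fin n) (Fin n) ℝ)
    (hAunit : IsUnit A) (hAinv : Nonneg A⁻¹)
    (hsB : A = B - C) (hBunit : IsUnit B)
    (hBi : Nonneg B⁻¹) (hBC : Nonneg (B⁻¹ * C))
    (hsU : A = U - V) (hUunit : IsUnit U)
    (hUi : Nonneg U⁻¹) (hV : Nonneg V)
    (hle : ∀ i j, U⁻¹ i j ≤ B⁻¹ i j) :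
    specRad (B⁻¹ * C) ≤ specRad (U⁻¹ * V) ∧ specRad (U⁻¹ * V) < 1 := by
  rcases Nat.eq_zero_or_pos n with hn | hn
  · subst hn
    have hempty : ∀ M : Matrix (Fin 0) (Fin 0) ℝ, specRad M = 0 := by
      intro M
      haveI : Subsingleton (Matrix (Fin 0) (Fin 0) ℂ) :=
        ⟨fun a b => by ext i; exact i.elim0⟩
      have h0 : spectrum ℂ (M.map (algebraMap ℝ ℂ)) = ∅ := by
        rw [Set.eq_empty_iff_forall_notMem]
        intro z hz
        exact (spectrum.mem_iff.mp hz) (isUnit_of_subsingleton _)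
      rw [specRad, h0, Set.image_empty, Real.sSup_empty]
    rw [hempty, hempty]; norm_num
  · haveI : Nonempty (Fin n) := ⟨⟨0, hn⟩⟩
    have hAd : IsUnit A.det := (Matrix.isUnit_iff_isUnit_det A).mp hAunit
    have hBd : IsUnit B.det := (Matrix.isUnit_iff_isUnit_det B).mp hBunit
    have hUd : IsUnit U.det := (Matrix.isUnit_iff_isUnit_det U).mp hUunit
    have hAA : A * A⁻¹ = 1 := Matrix.mul_nonsing_inv A hAd
    have hAA' : A⁻¹ * A = 1 := Matrix.nonsing_inv_mul A hAd
    have hBB' : B⁻¹ * B = 1 := Matrix.nonsing_inv_mul B hBd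
    have hUU : U * U⁻¹ = 1 := Matrix.mul_nonsing_inv U hUd
    have hUU' : U⁻¹ * U = 1 := Matrix.nonsing_inv_mul U hUd
    set G₁ := B⁻¹ * C with hG₁def
    set G₂ := U⁻¹ * V with hG₂def
    have hC : C = B - A := by rw [hsB]; abel
    have hVW : V = U - A := by rw [hsU]; abel
    have hG₁' : G₁ = 1 - B⁻¹ * A := by rw [hG₁def, hC, mul_sub, hBB']
    have hG₂' : G₂ = 1 - U⁻¹ * A := by rw [hG₂def, hVW, mul_sub, hUU']
    have hUinv : (1 - G₂) * A⁻¹ = U⁻¹ := by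
      rw [hG₂', sub_sub_cancel, mul_assoc, hAA, mul_one]
    have hAG₂ : A * G₂ = V * (1 - G₂) := by
      calc A * G₂ = (U - V) * (U⁻¹ * V) := by rw [← hsU, hG₂def]
        _ = U * (U⁻¹ * V) - V * (U⁻¹ * V) := by rw [sub_mul]
        _ = V - V * (U⁻¹ * V) := by rw [← mul_assoc, hUU, one_mul]
        _ = V * (1 - G₂) := by rw [mul_sub, mul_one, hG₂def]
    have hG₂nn : Nonneg G₂ := nn_mul hUi hV
    have hG₁nn : Nonneg G₁ := hBC
    have hkey1 : ∀ m : ℕ, A * G₂ ^ (m+1) * A⁻¹ = V * G₂ ^ m * U⁻¹ := by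
      intro m
      have comm : (1 - G₂) * G₂ ^ m = G₂ ^ m * (1 - G₂) := by
        rw [sub_mul, mul_sub, one_mul, mul_one, ← pow_succ, ← pow_succ']
      calc A * G₂ ^ (m+1) * A⁻¹ = (A * G₂) * ((1 : Matrix (Fin n) (Fin n) ℝ) * G₂ ^ m * A⁻¹) := by
            rw [pow_succ']; noncomm_ring
        _ = V * ((1 - G₂) * G₂ ^ m) * A⁻¹ := by rw [hAG₂]; noncomm_ring
        _ = V * (G₂ ^ m * (1 - G₂)) * A⁻¹ := by rw [comm]
        _ = V * G₂ ^ m * ((1 - G₂) * A⁻¹) := by noncomm_ring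
        _ = V * G₂ ^ m * U⁻¹ := by rw [hUinv]
    -- the key entrywise comparison, by induction
    have hdiff : (B⁻¹ - U⁻¹) * A = G₂ - G₁ := by rw [hG₁', hG₂']; noncomm_ring
    have hBUnn : Nonneg (B⁻¹ - U⁻¹) := fun i j => by
      simpa [Matrix.sub_apply] using sub_nonneg.mpr (hle i j)
    have hkeyind : ∀ m : ℕ, Nonneg (G₂ ^ (m+1) * A⁻¹ - G₁ ^ (m+1) * A⁻¹) := by
      intro m
      induction m with
      | zero =>
          have h : G₂ ^ 1 * A⁻¹ - G₁ ^ 1 * A⁻¹ = B⁻¹ - U⁻¹ := by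
            rw [pow_one, pow_one, hG₁', hG₂', sub_mul, sub_mul, one_mul,
              mul_assoc U⁻¹, hAA, mul_one, mul_assoc B⁻¹, hAA, mul_one]
            abel
          rw [h]; exact hBUnn
      | succ m ih =>
          have h1 : (B⁻¹ - U⁻¹) * (V * G₂ ^ m * U⁻¹) = (G₂ - G₁) * (G₂ ^ (m+1) * A⁻¹) := by
            rw [← hkey1 m, ← hdiff]
            noncomm_ring
          have hid : G₂ ^ (m+1+1) * A⁻¹ - G₁ ^ (m+1+1) * A⁻¹ =
              (B⁻¹ - U⁻¹) * (V * G₂ ^ m * U⁻¹)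
                + G₁ * (G₂ ^ (m+1) * A⁻¹ - G₁ ^ (m+1) * A⁻¹) := by
            rw [h1, aux_ring, ← pow_succ' G₂ (m+1), ← pow_succ' G₁ (m+1)]
          rw [hid]
          intro i j
          have t1 := nn_mul hBUnn (nn_mul (nn_mul hV (nn_pow hG₂nn m)) hUi)
          have t2 := nn_mul hG₁nn ih
          simpa [Matrix.add_apply] using add_nonneg (t1 i j) (t2 i j)
    -- norm comparison for powers
    have hcomp : ∀ m : ℕ, 1 ≤ m →
        ‖φ G₁ ^ m‖ ≤ (‖φ A⁻¹‖ * ‖φ A‖) * ‖φ G₂ ^ m‖ := by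
      intro m hm
      obtain ⟨m', rfl⟩ : ∃ m', m = m' + 1 := ⟨m - 1, by omega⟩
      have e1 : (φ G₁) ^ (m'+1) = φ (G₁ ^ (m'+1) * A⁻¹) * φ A := by
        rw [← _root_.map_mul, mul_assoc, hAA', mul_one, _root_.map_pow]
      have e2 : φ (G₂ ^ (m'+1) * A⁻¹) = (φ G₂) ^ (m'+1) * φ A⁻¹ := by
        rw [_root_.map_mul, _root_.map_pow]
      calc ‖φ G₁ ^ (m'+1)‖ = ‖φ (G₁ ^ (m'+1) * A⁻¹) * φ A‖ := by rw [e1]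
        _ ≤ ‖φ (G₁ ^ (m'+1) * A⁻¹)‖ * ‖φ A‖ := norm_mul_le _ _
        _ ≤ ‖φ (G₂ ^ (m'+1) * A⁻¹)‖ * ‖φ A‖ := by
            refine mul_le_mul_of_nonneg_right ?_ (norm_nonneg _)
            refine norm_map_mono (nn_mul (nn_pow hG₁nn _) hAinv) fun i j => ?_
            have := hkeyind m' i j
            simpa [Matrix.sub_apply, sub_nonneg] using this
        _ ≤ (‖φ G₂ ^ (m'+1)‖ * ‖φ A⁻¹‖) * ‖φ A‖ := by
            refine mul_le_mul_of_nonneg_right ?_ (norm_nonneg _)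
            rw [e2]; exact norm_mul_le _ _
        _ = (‖φ A⁻¹‖ * ‖φ A‖) * ‖φ G₂ ^ (m'+1)‖ := by ring
    -- convergence of powers of G₂
    have hterm_nn : ∀ k, Nonneg (G₂ ^ k * U⁻¹) := fun k => nn_mul (nn_pow hG₂nn k) hUi
    have hpow_nn : ∀ m, Nonneg (G₂ ^ m * A⁻¹) := fun m => nn_mul (nn_pow hG₂nn m) hAinv
    have hsum : ∀ m, ∑ k ∈ Finset.range m, G₂ ^ k * U⁻¹ = A⁻¹ - G₂ ^ m * A⁻¹ := by
      intro m
      have hterm : ∀ k, G₂ ^ k * U⁻¹ = G₂ ^ k * A⁻¹ - G₂ ^ (k+1) * A⁻¹ := by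
        intro k
        rw [← hUinv, pow_succ]
        noncomm_ring
      simp_rw [hterm]
      rw [Finset.sum_range_sub' (f := fun k => G₂ ^ k * A⁻¹), pow_zero, one_mul]
    have hentry : ∀ i j, Tendsto (fun k => (G₂ ^ k * U⁻¹) i j) atTop (nhds 0) := by
      intro i j
      apply Summable.tendsto_atTop_zero
      apply summable_of_sum_range_le (c := A⁻¹ i j) (fun k => hterm_nn k i j)
      intro m
      have h := congrArg (fun M : Matrix (Fin n) (Fin n) ℝ => M i j) (hsum m)
      simp only [Matrix.sum_apply, Matrix.sub_apply] at h
      rw [h]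
      linarith [hpow_nn m i j]
    have hentryG : ∀ i j, Tendsto (fun k => (G₂ ^ k) i j) atTop (nhds 0) := by
      intro i j
      have hrw : ∀ k, (G₂ ^ k) i j = ∑ l, (G₂ ^ k * U⁻¹) i l * U l j := by
        intro k
        conv_lhs => rw [show G₂ ^ k = G₂ ^ k * U⁻¹ * U by rw [mul_assoc, hUU', mul_one]]
        rw [Matrix.mul_apply]
      simp_rw [hrw]
      have := tendsto_finset_sum (Finset.univ : Finset (Fin n))
        (fun l _ => (hentry i l).mul_const (U l j))
      simpa using this
    have hnorm0 : Tendsto (fun k => ‖φ (G₂ ^ k)‖) atTop (nhds 0) := by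
      have hg : Tendsto (fun k => ∑ i, ∑ j, |(G₂ ^ k) i j|) atTop (nhds 0) := by
        have := tendsto_finset_sum (Finset.univ : Finset (Fin n)) fun i _ =>
          tendsto_finset_sum (Finset.univ : Finset (Fin n)) fun j _ => (hentryG i j).abs
        simpa using this
      exact squeeze_zero (fun k => norm_nonneg _) (fun k => norm_map_le_entry_sum _) hg
    have hex : ∃ k, 1 ≤ k ∧ ‖φ G₂ ^ k‖ < 1 := by
      have hev : ∀ᶠ k : ℕ in atTop, ‖φ (G₂ ^ k)‖ < 1 :=
        hnorm0.eventually_lt_const one_pos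
      obtain ⟨k, hk1, hk⟩ := ((eventually_ge_atTop 1).and hev).exists
      exact ⟨k, hk1, by rw [← _root_.map_pow]; exact hk⟩
    have h2 : specRad G₂ < 1 := specRad_lt_one hn hex
    have h1 : specRad G₁ ≤ specRad G₂ :=
      specRad_le_specRad hn (mul_nonneg (norm_nonneg _) (norm_nonneg _)) hcomp
    exact ⟨h1, h2⟩
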